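/- Let n ≥ 1 and let B ⊆ ℝ^{n+1} be a convex body containing no affine line, with 0 ∈ ∂B and B ⊆ {x ∈ ℝ^{n+1} : x₁ ≥ 0}, and suppose the first standard basis vector e₁ lies in (int N) ∩ R, where N and R are the normal cone (with respect to the standard Euclidean inner product) and recession cone of B. Let H = {x ∈ ℝ^{n+1} : x₁ = 0}, let Π : ℝ^{n+1} → H be the orthogonal projection, and let D = Π(∂B). Then D is a convex subset of H and, writing int_H D for its interior relative to H: (1) for every p ∈ int_H D, the fiber ∂B ∩ Π⁻¹(p) consists of exactly one point p + u(p)e₁, and the resulting function u : int_H D → ℝ is convex; (2) for every p ∈ D ∖ int_H D, the fiber ∂B ∩ Π⁻¹(p) is a closed half-line of the form {q₀ + t e₁ : t ≥ 0} for some q₀ ∈ ∂B with Π(q₀) = p. -/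

import Mathlib

open Set RealInnerProductSpace

noncomputable section

/-- The normal cone of a convex body `B` with respect to the standard Euclidean
inner product. -/
def euclNormalCone {n : ℕ} (B : Set (EuclideanSpace ℝ (Fin (n + 1)))) :
    Set (EuclideanSpace ℝ (Fin (n + 1))) :=
  {w | w ≠ 0 ∧ ∃ p ∈ frontier B, ∀ x ∈ B, 0 ≤ ⟪x - p, w⟫}

/-- The recession cone of a convex body `B`. -/
def recessionCone {n : ℕ} (B : Set (EuclideanSpace ℝ (Fin n))) :
    Set (EuclideanSpace ℝ (Fin n)) :=
  {v | ∀ x ∈ B, ∀ t : ℝ, 0 ≤ t → x + t • v ∈ B}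

/-- The first standard basis vector `e₁` of `ℝ^(n+1)`. -/
def e₁ (n : ℕ) : EuclideanSpace ℝ (Fin (n + 1)) :=
  EuclideanSpace.single 0 1

/-- Orthogonal projection of `ℝ^(n+1)` onto the hyperplane `H = {x : x₁ = 0}`. -/
def projH {n : ℕ} (x : EuclideanSpace ℝ (Fin (n + 1))) :
    EuclideanSpace ℝ (Fin (n + 1)) :=
  x - x 0 • e₁ n

/-- The interior of `D` relative to the hyperplane `H = {x : x₁ = 0}`. -/
def relIntH {n : ℕ} (D : Set (EuclideanSpace ℝ (Fin (n + 1)))) :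
    Set (EuclideanSpace ℝ (Fin (n + 1))) :=
  {p | p 0 = 0 ∧ ∃ ε > 0, ∀ q : EuclideanSpace ℝ (Fin (n + 1)),
    q 0 = 0 → dist q p < ε → q ∈ D}

/-!
Write `u(p)` for the lowest height `t` with `p + t e₁ ∈ B`. Since `B` lies in `{x₁ ≥ 0}` and is
closed, this minimum exists whenever the vertical line over `p` meets `B`, and since `e₁` is a
recession direction, that line meets `B` exactly in the ray `[u(p), ∞)`. Hence `D` is the set of
`p ∈ H` whose vertical line meets `B`, which is convex, and `u` is convex on `D` because `B` is.
Over a relative interior point `p` of `D`, the line is pushed into `int B` by combining points of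
`B` over nearby `p'` with an interior point of `B`, so only its lowest point lies on `∂B`.
Conversely, an interior point of `B` over `p` forces a whole neighbourhood of `p` in `H` into `D`;
so over the relative boundary of `D` the whole ray lies on `∂B`.
-/

variable {n : ℕ}

@[simp]
lemma e₁_apply_zero : e₁ n 0 = 1 := by simp [e₁]

lemma add_smul_e₁_apply_zero (p : EuclideanSpace ℝ (Fin (n + 1))) (t : ℝ) :
    (p + t • e₁ n) 0 = p 0 + t := by simp

@[simp]
lemma norm_e₁ : ‖e₁ n‖ = 1 := by simp [e₁]

@[simp]
lemma projH_apply_zero (x : EuclideanSpace ℝ (Fin (n + 1))) : projH x 0 = 0 := by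
  simp [projH]

lemma projH_add_apply_zero_smul_e₁ (x : EuclideanSpace ℝ (Fin (n + 1))) :
    projH x + x 0 • e₁ n = x := by
  simp [projH]

lemma projH_add_smul_e₁ {p : EuclideanSpace ℝ (Fin (n + 1))} (hp : p 0 = 0) (t : ℝ) :
    projH (p + t • e₁ n) = p := by
  rw [projH, add_smul_e₁_apply_zero, hp, zero_add, add_sub_cancel_right]

lemma frontier_inter_projH_preimage (B : Set (EuclideanSpace ℝ (Fin (n + 1))))
    {p : EuclideanSpace ℝ (Fin (n + 1))} (hp : p 0 = 0) :
    frontier B ∩ projH ⁻¹' {p} =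
      (fun t : ℝ => p + t • e₁ n) '' {t | p + t • e₁ n ∈ frontier B} := by
  ext x
  constructor
  · rintro ⟨hx, rfl : projH x = p⟩
    refine ⟨x 0, ?_, projH_add_apply_zero_smul_e₁ x⟩
    show projH x + x 0 • e₁ n ∈ frontier B
    rwa [projH_add_apply_zero_smul_e₁]
  · rintro ⟨t, ht, rfl⟩
    exact ⟨ht, projH_add_smul_e₁ hp t⟩

lemma relIntH_subset (D : Set (EuclideanSpace ℝ (Fin (n + 1)))) : relIntH D ⊆ D :=
  fun p ⟨hp, _, hε, hball⟩ => hball p hp (by simpa using hε)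

protected lemma Convex.relIntH {D : Set (EuclideanSpace ℝ (Fin (n + 1)))} (hD : Convex ℝ D) :
    Convex ℝ (relIntH D) := by
  rintro p ⟨hp0, εp, hεp, hp⟩ q ⟨hq0, εq, hεq, hq⟩ a b ha hb hab
  have hr0 : (a • p + b • q) 0 = 0 := by simp [hp0, hq0]
  refine ⟨hr0, min εp εq, lt_min hεp hεq, fun x hx0 hx => ?_⟩
  set v := x - (a • p + b • q)
  have hv0 : v 0 = 0 := by simp [v, hx0, hr0]
  have hv : ‖v‖ < min εp εq := by rwa [← dist_eq_norm]
  have hpv : p + v ∈ D :=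
    hp _ (by simp [hp0, hv0]) (by simpa using hv.trans_le (min_le_left _ _))
  have hqv : q + v ∈ D :=
    hq _ (by simp [hq0, hv0]) (by simpa using hv.trans_le (min_le_right _ _))
  convert hD hpv hqv ha hb hab using 1
  rw [smul_add, smul_add, add_add_add_comm, ← add_smul, hab, one_smul, add_sub_cancel]

def fiberHeights (B : Set (EuclideanSpace ℝ (Fin (n + 1)))) (p : EuclideanSpace ℝ (Fin (n + 1))) :
    Set ℝ :=
  {t | p + t • e₁ n ∈ B}

/-- The function `u` of the theorem: the lowest height at which the vertical line through `p`
meets `B` (a junk value `0` when it does not). -/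
def fiberBottom (B : Set (EuclideanSpace ℝ (Fin (n + 1)))) (p : EuclideanSpace ℝ (Fin (n + 1))) :
    ℝ :=
  sInf (fiberHeights B p)

section Fibers

variable {B : Set (EuclideanSpace ℝ (Fin (n + 1)))} {p : EuclideanSpace ℝ (Fin (n + 1))}

lemma bddBelow_fiberHeights (hhalf : ∀ x ∈ B, 0 ≤ x 0) (hp : p 0 = 0) :
    BddBelow (fiberHeights B p) :=
  ⟨0, fun t ht => by simpa [add_smul_e₁_apply_zero, hp] using hhalf _ ht⟩

lemma fiberBottom_le (hhalf : ∀ x ∈ B, 0 ≤ x 0) (hp : p 0 = 0) {t : ℝ}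
    (ht : p + t • e₁ n ∈ B) : fiberBottom B p ≤ t :=
  csInf_le (bddBelow_fiberHeights hhalf hp) ht

lemma fiberBottom_mem (hclosed : IsClosed B) (hhalf : ∀ x ∈ B, 0 ≤ x 0) (hp : p 0 = 0)
    (hne : (fiberHeights B p).Nonempty) : p + fiberBottom B p • e₁ n ∈ B :=
  (hclosed.preimage (by fun_prop)).csInf_mem hne (bddBelow_fiberHeights hhalf hp)

lemma fiberHeights_eq_Ici (hclosed : IsClosed B) (hhalf : ∀ x ∈ B, 0 ≤ x 0)
    (he₁R : e₁ n ∈ recessionCone B) (hp : p 0 = 0) (hne : (fiberHeights B p).Nonempty) :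
    fiberHeights B p = Ici (fiberBottom B p) := by
  refine Subset.antisymm (fun t ht => fiberBottom_le hhalf hp ht) fun t ht => ?_
  have h := he₁R _ (fiberBottom_mem hclosed hhalf hp hne) (t - fiberBottom B p) (sub_nonneg.2 ht)
  rwa [add_assoc, ← add_smul, add_sub_cancel] at h

lemma fiberBottom_mem_frontier (hclosed : IsClosed B) (hhalf : ∀ x ∈ B, 0 ≤ x 0) (hp : p 0 = 0)
    (hne : (fiberHeights B p).Nonempty) : p + fiberBottom B p • e₁ n ∈ frontier B := by
  refine hclosed.frontier_eq ▸ ⟨fiberBottom_mem hclosed hhalf hp hne, fun hint => ?_⟩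
  obtain ⟨δ, hδ, hball⟩ := Metric.isOpen_iff.mp isOpen_interior _ hint
  have hlower : p + (fiberBottom B p - δ / 2) • e₁ n ∈ B := by
    refine interior_subset (hball ?_)
    rw [Metric.mem_ball, dist_eq_norm, ← sub_sub, add_sub_cancel_left, ← sub_smul,
      sub_sub_cancel_left, norm_smul]
    simpa [abs_of_pos hδ] using hδ
  linarith [fiberBottom_le hhalf hp hlower]

lemma image_projH_frontier (hclosed : IsClosed B) (hhalf : ∀ x ∈ B, 0 ≤ x 0) :
    projH '' frontier B = {p | p 0 = 0 ∧ (fiberHeights B p).Nonempty} := by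
  ext p
  constructor
  · rintro ⟨x, hx, rfl⟩
    refine ⟨projH_apply_zero x, x 0, ?_⟩
    show projH x + x 0 • e₁ n ∈ B
    rw [projH_add_apply_zero_smul_e₁]
    exact hclosed.frontier_subset hx
  · rintro ⟨hp, hne⟩
    exact ⟨_, fiberBottom_mem_frontier hclosed hhalf hp hne, projH_add_smul_e₁ hp _⟩

lemma convexOn_fiberBottom (hconv : Convex ℝ B) (hclosed : IsClosed B)
    (hhalf : ∀ x ∈ B, 0 ≤ x 0) : ConvexOn ℝ (projH '' frontier B) (fiberBottom B) := by
  have combo : ∀ p ∈ projH '' frontier B, ∀ q ∈ projH '' frontier B, ∀ a b : ℝ, 0 ≤ a → 0 ≤ b →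
      a + b = 1 → (a • p + b • q) 0 = 0 ∧
        a * fiberBottom B p + b * fiberBottom B q ∈ fiberHeights B (a • p + b • q) := by
    simp only [image_projH_frontier hclosed hhalf]
    rintro p ⟨hp, hpne⟩ q ⟨hq, hqne⟩ a b ha hb hab
    refine ⟨by simp [hp, hq], ?_⟩
    show _ ∈ B
    convert hconv (fiberBottom_mem hclosed hhalf hp hpne) (fiberBottom_mem hclosed hhalf hq hqne)
      ha hb hab using 1
    module
  refine ⟨fun p hp q hq a b ha hb hab => ?_, fun p hp q hq a b ha hb hab => ?_⟩
  · obtain ⟨h0, hmem⟩ := combo p hp q hq a b ha hb hab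
    rw [image_projH_frontier hclosed hhalf]
    exact ⟨h0, _, hmem⟩
  · obtain ⟨h0, hmem⟩ := combo p hp q hq a b ha hb hab
    exact fiberBottom_le hhalf h0 hmem

lemma add_smul_e₁_mem_interior (he₁R : e₁ n ∈ recessionCone B) {x : EuclideanSpace ℝ (Fin (n + 1))}
    (hx : x ∈ interior B) {s : ℝ} (hs : 0 ≤ s) : x + s • e₁ n ∈ interior B := by
  have hsub : B ⊆ (Homeomorph.addRight (s • e₁ n)) ⁻¹' B := fun y hy => he₁R y hy s hs
  have hx' := interior_mono hsub hx
  rwa [← Homeomorph.preimage_interior] at hx'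

lemma exists_add_smul_e₁_mem_interior (hconv : Convex ℝ B) (hclosed : IsClosed B)
    (hint : (interior B).Nonempty) (hhalf : ∀ x ∈ B, 0 ≤ x 0)
    (hp : p ∈ relIntH (projH '' frontier B)) : ∃ h : ℝ, p + h • e₁ n ∈ interior B := by
  obtain ⟨hp0, ε, hε, hball⟩ := hp
  obtain ⟨z, hz⟩ := hint
  set w := projH z
  set c := z 0
  have hz_eq : z = w + c • e₁ n := (projH_add_apply_zero_smul_e₁ z).symm
  set d := p - w
  set l := ε / (‖d‖ + 1)
  have hl : 0 < l := by positivity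
  -- push `p` a little away from `projH z`, so that `p` lies between `projH z` and `p + l • d`
  have hfar : p + l • d ∈ projH '' frontier B := by
    refine hball _ (by simp [d, w, hp0]) ?_
    rw [dist_eq_norm, add_sub_cancel_left, norm_smul, Real.norm_of_nonneg hl.le, div_mul_eq_mul_div,
      div_lt_iff₀ (by positivity)]
    nlinarith [norm_nonneg d]
  rw [image_projH_frontier hclosed hhalf] at hfar
  obtain ⟨s, hs⟩ := hfar.2
  refine ⟨(l * c + s) / (1 + l), ?_⟩
  convert hconv.combo_interior_self_mem_interior hz hs (a := l / (1 + l)) (b := 1 / (1 + l))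
    (by positivity) (by positivity) (by field_simp; ring) using 1
  rw [hz_eq]
  match_scalars <;> field_simp; ring

lemma add_smul_e₁_mem_interior_of_fiberBottom_lt (hconv : Convex ℝ B) (hclosed : IsClosed B)
    (hint : (interior B).Nonempty) (hhalf : ∀ x ∈ B, 0 ≤ x 0) (he₁R : e₁ n ∈ recessionCone B)
    (hp : p ∈ relIntH (projH '' frontier B)) {t : ℝ} (ht : fiberBottom B p < t) :
    p + t • e₁ n ∈ interior B := by
  obtain ⟨h, hh⟩ := exists_add_smul_e₁_mem_interior hconv hclosed hint hhalf hp
  have hp0 := hp.1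
  have hne : (fiberHeights B p).Nonempty := ⟨h, interior_subset (s := B) hh⟩
  set u := fiberBottom B p
  set H := max h t
  have hH : p + u • e₁ n + (H - u) • e₁ n ∈ interior B := by
    rw [add_assoc, ← add_smul, add_sub_cancel]
    simpa [add_assoc, ← add_smul] using
      add_smul_e₁_mem_interior he₁R hh (sub_nonneg.2 (le_max_left h t))
  have hHu : 0 < H - u := sub_pos.2 (ht.trans_le (le_max_right h t))
  have hθ : (t - u) / (H - u) ∈ Ioc (0 : ℝ) 1 :=
    ⟨div_pos (sub_pos.2 ht) hHu, (div_le_one hHu).2 (by linarith [le_max_right h t])⟩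
  convert hconv.add_smul_mem_interior (fiberBottom_mem hclosed hhalf hp0 hne) hH hθ using 1
  rw [smul_smul, div_mul_cancel₀ _ hHu.ne', add_assoc, ← add_smul, add_sub_cancel]

lemma mem_relIntH_of_add_smul_e₁_mem_interior (hclosed : IsClosed B) (hhalf : ∀ x ∈ B, 0 ≤ x 0)
    (hp : p 0 = 0) {s : ℝ} (hs : p + s • e₁ n ∈ interior B) :
    p ∈ relIntH (projH '' frontier B) := by
  obtain ⟨δ, hδ, hball⟩ := Metric.isOpen_iff.mp isOpen_interior _ hs
  refine ⟨hp, δ, hδ, fun q hq hqp => ?_⟩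
  rw [image_projH_frontier hclosed hhalf]
  exact ⟨hq, s, interior_subset (s := B) (hball (by rwa [Metric.mem_ball, dist_add_right]))⟩

lemma frontier_heights_eq_singleton_of_mem_relIntH (hconv : Convex ℝ B) (hclosed : IsClosed B)
    (hint : (interior B).Nonempty) (hhalf : ∀ x ∈ B, 0 ≤ x 0) (he₁R : e₁ n ∈ recessionCone B)
    (hp : p ∈ relIntH (projH '' frontier B)) :
    {t | p + t • e₁ n ∈ frontier B} = {fiberBottom B p} := by
  have hne : (fiberHeights B p).Nonempty := by
    have := relIntH_subset _ hp
    rw [image_projH_frontier hclosed hhalf] at this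
    exact this.2
  refine Subset.antisymm (fun t ht => ?_) ?_
  · rw [hclosed.frontier_eq] at ht
    refine (fiberBottom_le hhalf hp.1 ht.1).eq_or_lt.elim Eq.symm fun hlt => ?_
    exact absurd (add_smul_e₁_mem_interior_of_fiberBottom_lt hconv hclosed hint hhalf he₁R hp hlt)
      ht.2
  · rintro t rfl
    exact fiberBottom_mem_frontier hclosed hhalf hp.1 hne

lemma frontier_heights_eq_Ici_of_notMem_relIntH (hclosed : IsClosed B) (hhalf : ∀ x ∈ B, 0 ≤ x 0)
    (he₁R : e₁ n ∈ recessionCone B) (hp : p 0 = 0) (hne : (fiberHeights B p).Nonempty)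
    (hpD : p ∉ relIntH (projH '' frontier B)) :
    {t | p + t • e₁ n ∈ frontier B} = Ici (fiberBottom B p) := by
  rw [← fiberHeights_eq_Ici hclosed hhalf he₁R hp hne, hclosed.frontier_eq]
  exact Subset.antisymm (fun t ht => ht.1) fun t ht =>
    ⟨ht, fun hint => hpD (mem_relIntH_of_add_smul_e₁_mem_interior hclosed hhalf hp hint)⟩

end Fibers

theorem stmt_13 (n : ℕ)
    (B : Set (EuclideanSpace ℝ (Fin (n + 1))))
    (hconv : Convex ℝ B) (hclosed : IsClosed B) (hint : (interior B).Nonempty)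
    (hhalf : ∀ x ∈ B, 0 ≤ x 0)
    (he₁R : e₁ n ∈ recessionCone B) :
    (∀ x ∈ projH '' frontier B, x 0 = 0) ∧
    Convex ℝ (projH '' frontier B) ∧
    -- (1) over the relative interior of D, the boundary is the graph of a convex function
    (∃ u : EuclideanSpace ℝ (Fin (n + 1)) → ℝ,
      ConvexOn ℝ (relIntH (projH '' frontier B)) u ∧
      ∀ p ∈ relIntH (projH '' frontier B),
        frontier B ∩ projH ⁻¹' {p} = {p + u p • e₁ n}) ∧
    -- (2) over boundary points of D, the fibers are vertical closed half-lines
    (∀ p ∈ (projH '' frontier B) \ relIntH (projH '' frontier B),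
      ∃ q₀ ∈ frontier B, projH q₀ = p ∧
        frontier B ∩ projH ⁻¹' {p} = (fun t : ℝ => q₀ + t • e₁ n) '' Ici (0 : ℝ)) := by
  have hu := convexOn_fiberBottom hconv hclosed hhalf
  refine ⟨?_, hu.1, ⟨fiberBottom B, hu.subset (relIntH_subset _) hu.1.relIntH, fun p hp => ?_⟩,
    fun p ⟨hpD, hp_bdry⟩ => ?_⟩
  · rintro _ ⟨x, -, rfl⟩
    exact projH_apply_zero x
  · rw [frontier_inter_projH_preimage B hp.1,
      frontier_heights_eq_singleton_of_mem_relIntH hconv hclosed hint hhalf he₁R hp,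
      image_singleton]
  · rw [image_projH_frontier hclosed hhalf] at hpD
    obtain ⟨hp, hne⟩ := hpD
    refine ⟨_, fiberBottom_mem_frontier hclosed hhalf hp hne, projH_add_smul_e₁ hp _, ?_⟩
    have hshift : Ici (fiberBottom B p) = (· + fiberBottom B p) '' Ici 0 := by
      rw [image_add_const_Ici, zero_add]
    rw [frontier_inter_projH_preimage B hp,
      frontier_heights_eq_Ici_of_notMem_relIntH hclosed hhalf he₁R hp hne hp_bdry, hshift, image_image]
    exact image_congr fun t _ => by module
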